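/- Let m ≥ 2 and n, s ≥ 1. The following are equivalent: (1) there is an m-ary function f : U_m^n → U_m of degree deg(f) = (m-1)·n and sensitivity s(f) = s; (2) there are (possibly empty) induced subgraphs {H_{ε^k} : 0 ≤ k ≤ m-1} of the Hamming graph H(n,m) whose vertex sets partition U_m^n, such that Σ_{k=0}^{m-1} |ρ(V(H_{ε^k}))|·ε^k ≠ 0 and (m-1)·n − min{δ(H_{ε^k}) : 0 ≤ k ≤ m-1} = s. -/
import Mathlib


open scoped Classical

noncomputable section

/-- The primitive `m`-th root of unity `ε = e^{2πi/m}`. -/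
def primRoot (m : ℕ) : ℂ := Complex.exp (2 * Real.pi * Complex.I / m)

/-- The bijection `k ↦ ε^k` from `ZMod m` onto the set `U_m` of `m`-th roots of unity;
vectors of `U_m^n` are modelled by their exponent vectors in `(ZMod m)^n`. -/
def uRoot (m : ℕ) (k : ZMod m) : ℂ := primRoot m ^ k.val

/-- `F` represents the `m`-ary function `U_m^n → U_m` given in exponents by `g`,
i.e. the function `(ε^{x 1}, …, ε^{x n}) ↦ ε^{g x}`. -/
def RepresentsU (m n : ℕ) (F : MvPolynomial (Fin n) ℂ)
    (g : (Fin n → ZMod m) → ZMod m) : Prop :=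
  ∀ x : Fin n → ZMod m, MvPolynomial.eval (fun i => uRoot m (x i)) F = uRoot m (g x)

/-- Degree of the `m`-ary function `U_m^n → U_m` given in exponents by `g`. -/
def degU (m n : ℕ) (g : (Fin n → ZMod m) → ZMod m) : ℕ :=
  sInf {d | ∃ F : MvPolynomial (Fin n) ℂ, RepresentsU m n F g ∧ F.totalDegree = d}

/-- Local sensitivity of the `m`-ary function `U_m^n → U_m` given in exponents by `g`. -/
def localSensU (m n : ℕ) [NeZero m] (g : (Fin n → ZMod m) → ZMod m)
    (x : Fin n → ZMod m) : ℕ :=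
  (Finset.univ.filter fun y : Fin n → ZMod m => hammingDist x y = 1 ∧ g y ≠ g x).card

/-- Sensitivity of the `m`-ary function `U_m^n → U_m` given in exponents by `g`. -/
def sensU (m n : ℕ) [NeZero m] (g : (Fin n → ZMod m) → ZMod m) : ℕ :=
  Finset.univ.sup (localSensU m n g)

/-- Degree of the vertex `v` in the subgraph of the Hamming graph induced on `V`:
the number of vertices of `V` at Hamming distance exactly `1` from `v`. -/
def indDeg {ι α : Type*} [Fintype ι] (V : Finset (ι → α)) (v : ι → α) : ℕ :=
  (V.filter fun w => hammingDist v w = 1).card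

/-- Minimum degree `δ` of the subgraph of the Hamming graph induced on `V`
(it is `⊤ = +∞` for the empty graph). -/
def minDeg {ι α : Type*} [Fintype ι] (V : Finset (ι → α)) : ℕ∞ :=
  V.inf fun v => (indDeg V v : ℕ∞)

/-- Maximum degree `Δ` of the subgraph of the Hamming graph induced on `V`. -/
def maxDeg {ι α : Type*} [Fintype ι] (V : Finset (ι → α)) : ℕ :=
  V.sup fun v => indDeg V v

/-- The rotation `ρ` applied to the part `V k` of a partition of `U_m^n` (in exponent
coordinates): `x ∈ ρ(V)_k` iff `x ∈ C_{ε^j} ∩ V_{ε^{k-j}}` for some `j`, where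
`C_{ε^j}` consists of the vertices whose entries multiply to `ε^j`, i.e. whose exponents
sum to `j`. -/
def rho (m n : ℕ) [NeZero m] (V : ZMod m → Finset (Fin n → ZMod m)) (k : ZMod m) :
    Finset (Fin n → ZMod m) :=
  Finset.univ.filter fun x => x ∈ V (k - ∑ i, x i)

set_option linter.unusedSectionVars false

section Char
variable (m : ℕ) [NeZero m]

lemma primRoot_isPrim : IsPrimitiveRoot (primRoot m) m :=
  Complex.isPrimitiveRoot_exp m (NeZero.ne m)

lemma primRoot_pow_m : primRoot m ^ m = 1 := (primRoot_isPrim m).pow_eq_one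

lemma primRoot_pow_nat (j : ℕ) : primRoot m ^ j = uRoot m (j : ZMod m) := by
  conv_lhs => rw [← Nat.div_add_mod j m]
  rw [pow_add, pow_mul, primRoot_pow_m, one_pow, one_mul, uRoot, ZMod.val_natCast]

lemma uRoot_zero : uRoot m 0 = 1 := by
  simp [uRoot, ZMod.val_zero]

lemma uRoot_add (a b : ZMod m) : uRoot m (a + b) = uRoot m a * uRoot m b := by
  rw [uRoot, uRoot, uRoot, ← pow_add, primRoot_pow_nat, primRoot_pow_nat m (a.val + b.val)]
  congr 1
  push_cast
  simp [ZMod.natCast_val, ZMod.cast_id]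

lemma uRoot_eq_one_iff (a : ZMod m) : uRoot m a = 1 ↔ a = 0 := by
  rw [uRoot, (primRoot_isPrim m).pow_eq_one_iff_dvd]
  constructor
  · intro h
    have := Nat.eq_zero_of_dvd_of_lt h |>.mt
    have hlt := ZMod.val_lt a
    rcases Nat.eq_zero_of_dvd_of_lt h (by omega) with h0
    · exact (ZMod.val_eq_zero a).mp (by omega)
  · rintro rfl; simp [ZMod.val_zero]

lemma uRoot_mul_nat (a : ZMod m) (j : ℕ) : uRoot m (a * j) = uRoot m a ^ j := by
  rw [uRoot, uRoot, ← pow_mul, primRoot_pow_nat, primRoot_pow_nat m (a.val * j)]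
  congr 1
  push_cast
  simp [ZMod.natCast_val, ZMod.cast_id]

lemma charSum (c : ZMod m) : (∑ t : ZMod m, uRoot m (c * t)) = if c = 0 then (m : ℂ) else 0 := by
  split_ifs with h
  · subst h; simp [uRoot_zero, ZMod.card]
  · have h1 : uRoot m c ≠ 1 := fun hc => h ((uRoot_eq_one_iff m c).mp hc)
    have : (∑ t : ZMod m, uRoot m (c * t)) = ∑ j ∈ Finset.range m, uRoot m c ^ j := by
      rw [Finset.sum_bij (fun (t : ZMod m) _ => t.val)]
      · intro t _; exact Finset.mem_range.mpr (ZMod.val_lt t)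
      · intro a _ b _ hab; exact ZMod.val_injective m hab
      · intro j hj; exact ⟨(j : ZMod m), Finset.mem_univ _, by rw [ZMod.val_natCast_of_lt (Finset.mem_range.mp hj)]⟩
      · intro t _
        rw [← uRoot_mul_nat]
        congr 1
        rw [ZMod.natCast_val, ZMod.cast_id]
    rw [this]
    have hg := geom_sum_mul (uRoot m c) m
    have hm : uRoot m c ^ m = 1 := by
      rw [uRoot, ← pow_mul, mul_comm, pow_mul, primRoot_pow_m, one_pow]
    rw [hm, sub_self] at hg
    exact (mul_eq_zero.mp hg).resolve_right (sub_ne_zero.mpr h1)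

lemma uRoot_sum {ι : Type*} (s : Finset ι) (f : ι → ZMod m) :
    uRoot m (∑ i ∈ s, f i) = ∏ i ∈ s, uRoot m (f i) := by
  induction s using Finset.cons_induction with
  | empty => simp [uRoot_zero]
  | cons a s ha ih => rw [Finset.sum_cons, Finset.prod_cons, uRoot_add, ih]

end Char

section Poly
open MvPolynomial
variable (m n : ℕ) [NeZero m] (g : (Fin n → ZMod m) → ZMod m)

/-- The key character sum `S`. -/
def keyS : ℂ := ∑ x : Fin n → ZMod m, uRoot m (g x + ∑ i, x i)

lemma lower_bound {F : MvPolynomial (Fin n) ℂ} (hF : RepresentsU m n F g)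
    (hS : keyS m n g ≠ 0) : (m - 1) * n ≤ F.totalDegree := by
  have key : keyS m n g =
      ∑ d ∈ F.support, F.coeff d * ∏ i, (∑ t : ZMod m, uRoot m t ^ (d i + 1)) := by
    have h1 : ∀ x : Fin n → ZMod m,
        uRoot m (g x + ∑ i, x i)
          = ∑ d ∈ F.support, F.coeff d * ∏ i, uRoot m (x i) ^ (d i + 1) := by
      intro x
      rw [uRoot_add, ← hF x, eval_eq', Finset.sum_mul, uRoot_sum]
      refine Finset.sum_congr rfl fun d _ => ?_
      rw [mul_assoc, ← Finset.prod_mul_distrib]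
      simp [pow_succ]
    rw [keyS, Finset.sum_congr rfl fun x _ => h1 x, Finset.sum_comm]
    refine Finset.sum_congr rfl fun d _ => ?_
    rw [← Finset.mul_sum]
    congr 1
    rw [Finset.prod_univ_sum (fun _ => Finset.univ)
      (fun i (t : ZMod m) => uRoot m t ^ (d i + 1)), Fintype.piFinset_univ]
  have key2 : keyS m n g = ∑ d ∈ F.support,
      F.coeff d * ∏ i, (if ((d i + 1 : ℕ) : ZMod m) = 0 then (m : ℂ) else 0) := by
    rw [key]
    refine Finset.sum_congr rfl fun d _ => ?_
    congr 1
    refine Finset.prod_congr rfl fun i _ => ?_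
    rw [← charSum m ((d i + 1 : ℕ) : ZMod m)]
    refine Finset.sum_congr rfl fun t _ => ?_
    rw [← uRoot_mul_nat m t (d i + 1), mul_comm]
  obtain ⟨d, hd, hne⟩ : ∃ d ∈ F.support,
      F.coeff d * ∏ i, (if ((d i + 1 : ℕ) : ZMod m) = 0 then (m : ℂ) else 0) ≠ 0 := by
    by_contra hc
    push_neg at hc
    exact hS (key2.trans (Finset.sum_eq_zero hc))
  have hdvd : ∀ i, m - 1 ≤ d i := by
    intro i
    by_contra hlt
    apply hne
    apply mul_eq_zero_of_right
    apply Finset.prod_eq_zero (Finset.mem_univ i)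
    rw [if_neg]
    intro h0
    have := (ZMod.natCast_eq_zero_iff (d i + 1) m).mp h0
    have := Nat.le_of_dvd (Nat.succ_pos _) this
    omega
  calc (m - 1) * n = ∑ _i : Fin n, (m - 1) := by
        rw [Finset.sum_const, Finset.card_univ, Fintype.card_fin, smul_eq_mul, mul_comm]
    _ ≤ ∑ i, d i := Finset.sum_le_sum fun i _ => hdvd i
    _ = d.sum fun _ e => e := (Finsupp.sum_fintype d (fun _ e => e) fun _ => rfl).symm
    _ ≤ F.totalDegree := le_totalDegree hd

end Poly

section Canon
open MvPolynomial
variable (m n : ℕ) [NeZero m] (g : (Fin n → ZMod m) → ZMod m)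

def canonCoef (d : Fin n → ZMod m) : ℂ :=
  ((m : ℂ))⁻¹ ^ n * ∑ y : Fin n → ZMod m, uRoot m (g y - ∑ i, d i * y i)

def canonPoly : MvPolynomial (Fin n) ℂ :=
  ∑ d : Fin n → ZMod m, C (canonCoef m n g d) * ∏ i, X i ^ (d i).val

lemma uRoot_pow_val (a b : ZMod m) : uRoot m a ^ b.val = uRoot m (b * a) := by
  rw [← uRoot_mul_nat m a b.val]
  congr 1
  rw [ZMod.natCast_val, ZMod.cast_id, mul_comm]

lemma canon_eval (x : Fin n → ZMod m) :
    MvPolynomial.eval (fun i => uRoot m (x i)) (canonPoly m n g) = uRoot m (g x) := by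
  have hm0 : (m : ℂ) ≠ 0 := Nat.cast_ne_zero.mpr (NeZero.ne m)
  rw [canonPoly, map_sum]
  have h1 : ∀ d : Fin n → ZMod m,
      MvPolynomial.eval (fun i => uRoot m (x i)) (C (canonCoef m n g d) * ∏ i, X i ^ (d i).val)
        = canonCoef m n g d * uRoot m (∑ i, d i * x i) := by
    intro d
    rw [uRoot_sum]
    simp only [map_mul, map_prod, map_pow, eval_C, eval_X]
    congr 1
    exact Finset.prod_congr rfl fun i _ => uRoot_pow_val m (x i) (d i)
  rw [Finset.sum_congr rfl fun d _ => h1 d]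
  have h2 : ∀ d : Fin n → ZMod m, canonCoef m n g d * uRoot m (∑ i, d i * x i)
      = ((m : ℂ))⁻¹ ^ n * ∑ y : Fin n → ZMod m,
          uRoot m (g y) * ∏ i, uRoot m (d i * (x i - y i)) := by
    intro d
    rw [canonCoef, mul_assoc, Finset.sum_mul]
    congr 1
    refine Finset.sum_congr rfl fun y _ => ?_
    rw [← uRoot_add, ← uRoot_sum, ← uRoot_add]
    congr 1
    have : ∑ i, d i * (x i - y i) = (∑ i, d i * x i) - ∑ i, d i * y i := by
      rw [← Finset.sum_sub_distrib]
      exact Finset.sum_congr rfl fun i _ => mul_sub _ _ _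
    rw [this]
    ring
  rw [Finset.sum_congr rfl fun d _ => h2 d, ← Finset.mul_sum, Finset.sum_comm]
  have h3 : ∀ y : Fin n → ZMod m,
      (∑ d : Fin n → ZMod m, uRoot m (g y) * ∏ i, uRoot m (d i * (x i - y i)))
        = uRoot m (g y) * ∏ i, (if x i - y i = 0 then (m : ℂ) else 0) := by
    intro y
    rw [← Finset.mul_sum]
    congr 1
    rw [← Fintype.piFinset_univ,
      ← Finset.prod_univ_sum (fun _ => Finset.univ) (fun i (t : ZMod m) => uRoot m (t * (x i - y i)))]
    exact Finset.prod_congr rfl fun i _ => by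
      rw [← charSum m (x i - y i)]
      exact Finset.sum_congr rfl fun t _ => by rw [mul_comm]
  rw [Finset.sum_congr rfl fun y _ => h3 y]
  rw [Finset.sum_eq_single x]
  · rw [Finset.prod_congr rfl (fun i _ => if_pos (by simp)), Finset.prod_const,
      Finset.card_univ, Fintype.card_fin]
    have hone : ((m : ℂ))⁻¹ ^ n * ((m : ℂ)) ^ n = 1 := by
      rw [← mul_pow, inv_mul_cancel₀ hm0, one_pow]
    calc ((m : ℂ))⁻¹ ^ n * (uRoot m (g x) * (m : ℂ) ^ n)
        = uRoot m (g x) * (((m : ℂ))⁻¹ ^ n * ((m : ℂ)) ^ n) := by ring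
      _ = uRoot m (g x) := by rw [hone, mul_one]
  · intro y _ hyx
    obtain ⟨i, hi⟩ : ∃ i, x i ≠ y i := by
      by_contra hc
      push_neg at hc
      exact hyx (funext fun i => (hc i).symm)
    apply mul_eq_zero_of_right
    exact Finset.prod_eq_zero (Finset.mem_univ i) (if_neg (sub_ne_zero.mpr hi))
  · intro h
    exact absurd (Finset.mem_univ x) h

lemma canon_represents : RepresentsU m n (canonPoly m n g) g := fun x => canon_eval m n g x

lemma canon_term_deg (d : Fin n → ZMod m) :
    (C (canonCoef m n g d) * ∏ i, (X i : MvPolynomial (Fin n) ℂ) ^ (d i).val).totalDegree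
      ≤ ∑ i, (d i).val := by
  refine le_trans (totalDegree_mul _ _) ?_
  rw [totalDegree_C, zero_add]
  refine le_trans (totalDegree_finset_prod _ _) ?_
  exact Finset.sum_le_sum fun i _ => le_of_eq (totalDegree_X_pow _ _)

lemma canon_deg_le : (canonPoly m n g).totalDegree ≤ (m - 1) * n := by
  refine le_trans (totalDegree_finset_sum _ _) ?_
  refine Finset.sup_le fun d _ => le_trans (canon_term_deg m n g d) ?_
  calc ∑ i, (d i).val ≤ ∑ _i : Fin n, (m - 1) :=
        Finset.sum_le_sum fun i _ => by have := ZMod.val_lt (d i); omega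
    _ = (m - 1) * n := by
        rw [Finset.sum_const, Finset.card_univ, Fintype.card_fin, smul_eq_mul, mul_comm]

end Canon

section DegIff
open MvPolynomial
variable (m n : ℕ) [NeZero m] (g : (Fin n → ZMod m) → ZMod m)

lemma neg_one_val (hm : 2 ≤ m) : (-1 : ZMod m).val = m - 1 := by
  have h1 : (1 : ZMod m).val = 1 := by
    rw [ZMod.val_one_eq_one_mod, Nat.mod_eq_of_lt (by omega)]
  rw [ZMod.neg_val, if_neg, h1]
  intro h
  rw [h, ZMod.val_zero] at h1
  omega

lemma canonCoef_top : canonCoef m n g (fun _ => -1) = ((m : ℂ))⁻¹ ^ n * keyS m n g := by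
  rw [canonCoef, keyS]
  congr 1
  refine Finset.sum_congr rfl fun y _ => ?_
  congr 1
  simp [neg_one_mul, Finset.sum_neg_distrib, sub_neg_eq_add]

lemma canon_deg_lt (hm : 2 ≤ m) (hn : 1 ≤ n) (hS : keyS m n g = 0) :
    (canonPoly m n g).totalDegree < (m - 1) * n := by
  have hcoef : canonCoef m n g (fun _ => -1) = 0 := by
    rw [canonCoef_top, hS, mul_zero]
  have hterm : C (canonCoef m n g (fun _ => -1)) *
      ∏ i, (X i : MvPolynomial (Fin n) ℂ) ^ (((fun _ => -1 : Fin n → ZMod m)) i).val = 0 := by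
    rw [hcoef, map_zero, zero_mul]
  have hsplit : canonPoly m n g = ∑ d ∈ Finset.univ.erase (fun _ => -1 : Fin n → ZMod m),
      C (canonCoef m n g d) * ∏ i, (X i : MvPolynomial (Fin n) ℂ) ^ (d i).val := by
    rw [canonPoly, ← Finset.sum_erase_add _ _ (Finset.mem_univ (fun _ => -1 : Fin n → ZMod m)),
      hterm, add_zero]
  rw [hsplit]
  refine lt_of_le_of_lt (totalDegree_finset_sum _ _) ?_
  rw [Finset.sup_lt_iff (Nat.mul_pos (by omega) (by omega))]
  intro d hd
  refine lt_of_le_of_lt (canon_term_deg m n g d) ?_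
  obtain ⟨i0, hi0⟩ : ∃ i, d i ≠ -1 := by
    by_contra hc
    push_neg at hc
    exact (Finset.ne_of_mem_erase hd) (funext hc)
  have hval : ∀ i, (d i).val ≤ m - 1 := fun i => by have := ZMod.val_lt (d i); omega
  have hstrict : (d i0).val < m - 1 := by
    have h1 := hval i0
    rcases lt_or_eq_of_le h1 with h | h
    · exact h
    · exfalso
      apply hi0
      apply ZMod.val_injective
      rw [h, neg_one_val m hm]
  calc ∑ i, (d i).val < ∑ _i : Fin n, (m - 1) :=
        Finset.sum_lt_sum (fun i _ => hval i) ⟨i0, Finset.mem_univ _, hstrict⟩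
    _ = (m - 1) * n := by
        rw [Finset.sum_const, Finset.card_univ, Fintype.card_fin, smul_eq_mul, mul_comm]

lemma degU_iff (hm : 2 ≤ m) (hn : 1 ≤ n) :
    degU m n g = (m - 1) * n ↔ keyS m n g ≠ 0 := by
  have hmem : (canonPoly m n g).totalDegree ∈
      {d | ∃ F : MvPolynomial (Fin n) ℂ, RepresentsU m n F g ∧ F.totalDegree = d} :=
    ⟨canonPoly m n g, canon_represents m n g, rfl⟩
  constructor
  · intro h hS
    have h1 : degU m n g ≤ (canonPoly m n g).totalDegree := Nat.sInf_le hmem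
    have h2 := canon_deg_lt m n g hm hn hS
    omega
  · intro hS
    refine le_antisymm ?_ ?_
    · exact le_trans (Nat.sInf_le hmem) (canon_deg_le m n g)
    · refine le_csInf ⟨_, hmem⟩ ?_
      rintro b ⟨F, hF, rfl⟩
      exact lower_bound m n g hF hS

end DegIff

section Sens
variable (m n : ℕ) [NeZero m] (g : (Fin n → ZMod m) → ZMod m)

lemma neighbors_card (hm : 2 ≤ m) (x : Fin n → ZMod m) :
    (Finset.univ.filter fun y : Fin n → ZMod m => hammingDist x y = 1).card = (m - 1) * n := by
  have hcard : ((Finset.univ : Finset (Fin n)) ×ˢ ((Finset.univ : Finset (ZMod m)).erase 0)).card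
      = n * (m - 1) := by
    rw [Finset.card_product, Finset.card_erase_of_mem (Finset.mem_univ _),
      Finset.card_univ, Finset.card_univ, Fintype.card_fin, ZMod.card]
  have hbij : ((Finset.univ : Finset (Fin n)) ×ˢ ((Finset.univ : Finset (ZMod m)).erase 0)).card
      = (Finset.univ.filter fun y : Fin n → ZMod m => hammingDist x y = 1).card := by
    refine Finset.card_bij (fun p _ => Function.update x p.1 (x p.1 + p.2)) ?_ ?_ ?_
    · rintro ⟨i, c⟩ hp
      have hc : c ≠ 0 := Finset.ne_of_mem_erase (Finset.mem_product.mp hp).2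
      refine Finset.mem_filter.mpr ⟨Finset.mem_univ _, ?_⟩
      show (Finset.univ.filter fun j => x j ≠ Function.update x i (x i + c) j).card = 1
      have hset : (Finset.univ.filter fun j => x j ≠ Function.update x i (x i + c) j) = {i} := by
        ext j
        rcases eq_or_ne j i with rfl | hj
        · simp [Function.update_self, hc]
        · simp [Function.update_of_ne hj, hj]
      rw [hset, Finset.card_singleton]
    · rintro ⟨i, c⟩ hp ⟨i', c'⟩ hp' heq
      have hc : c ≠ 0 := Finset.ne_of_mem_erase (Finset.mem_product.mp hp).2
      have heq' : Function.update x i (x i + c) = Function.update x i' (x i' + c') := heq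
      have hii : i = i' := by
        by_contra hii
        have h1 := congrFun heq' i
        rw [Function.update_self, Function.update_of_ne hii] at h1
        simp at h1
        exact hc h1
      subst hii
      have h1 := congrFun heq' i
      rw [Function.update_self, Function.update_self] at h1
      rw [add_left_cancel h1]
    · intro y hy
      have h1 : (Finset.univ.filter fun j => x j ≠ y j).card = 1 :=
        (Finset.mem_filter.mp hy).2
      obtain ⟨i, hi⟩ := Finset.card_eq_one.mp h1
      have hmem : ∀ j, x j ≠ y j ↔ j = i := by
        intro j
        constructor
        · intro hj
          have : j ∈ Finset.univ.filter fun j => x j ≠ y j :=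
            Finset.mem_filter.mpr ⟨Finset.mem_univ _, hj⟩
          rw [hi] at this
          exact Finset.mem_singleton.mp this
        · intro hj
          rw [hj]
          have h2 : i ∈ Finset.univ.filter fun j => x j ≠ y j := by
            rw [hi]; exact Finset.mem_singleton_self i
          exact (Finset.mem_filter.mp h2).2
      have hxi : x i ≠ y i := (hmem i).mpr rfl
      refine ⟨⟨i, y i - x i⟩, ?_, ?_⟩
      · exact Finset.mem_product.mpr ⟨Finset.mem_univ _,
          Finset.mem_erase.mpr ⟨sub_ne_zero.mpr (Ne.symm hxi), Finset.mem_univ _⟩⟩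
      · show Function.update x i (x i + (y i - x i)) = y
        funext j
        rcases eq_or_ne j i with rfl | hj
        · rw [Function.update_self]; ring
        · rw [Function.update_of_ne hj]
          by_contra hne
          exact hj ((hmem j).mp hne)
  rw [← hbij, hcard, Nat.mul_comm]

lemma indDeg_card (V : ZMod m → Finset (Fin n → ZMod m))
    (hgV : ∀ x k, x ∈ V k ↔ g x = k) (x : Fin n → ZMod m) (k : ZMod m) :
    indDeg (V k) x = (Finset.univ.filter fun y : Fin n → ZMod m =>
      hammingDist x y = 1 ∧ g y = k).card := by
  rw [indDeg]
  congr 1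
  ext y
  simp only [Finset.mem_filter, Finset.mem_univ, true_and]
  rw [hgV]
  constructor <;> intro h <;> refine ⟨?_, ?_⟩ <;>
    first
      | exact h.1
      | exact h.2
      | (convert h.1 using 2 <;> exact Subsingleton.elim _ _)
      | (convert h.2 using 2 <;> exact Subsingleton.elim _ _)

lemma local_plus_ind (hm : 2 ≤ m) (V : ZMod m → Finset (Fin n → ZMod m))
    (hgV : ∀ x k, x ∈ V k ↔ g x = k) (x : Fin n → ZMod m) :
    localSensU m n g x + indDeg (V (g x)) x = (m - 1) * n := by
  rw [indDeg_card m n g V hgV x (g x), localSensU, ← neighbors_card m n hm x]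
  have e1 : (Finset.univ.filter fun y : Fin n → ZMod m => hammingDist x y = 1 ∧ g y ≠ g x)
      = (Finset.univ.filter fun y : Fin n → ZMod m => hammingDist x y = 1).filter
          (fun y => ¬ g y = g x) := by
    rw [Finset.filter_filter]
  have e2 : (Finset.univ.filter fun y : Fin n → ZMod m => hammingDist x y = 1 ∧ g y = g x)
      = (Finset.univ.filter fun y : Fin n → ZMod m => hammingDist x y = 1).filter
          (fun y => g y = g x) := by
    rw [Finset.filter_filter]
  rw [e1, e2, add_comm]
  exact Finset.card_filter_add_card_filter_not (fun y => g y = g x)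

lemma sens_formula (hm : 2 ≤ m) (hn : 1 ≤ n) (V : ZMod m → Finset (Fin n → ZMod m))
    (hgV : ∀ x k, x ∈ V k ↔ g x = k) :
    (((m - 1) * n : ℕ) : ℕ∞) - Finset.univ.inf (fun k : ZMod m => minDeg (V k))
      = (sensU m n g : ℕ∞) := by
  have hne : (Finset.univ : Finset (Fin n → ZMod m)).Nonempty := Finset.univ_nonempty
  have hinf : Finset.univ.inf (fun k : ZMod m => minDeg (V k))
      = Finset.univ.inf (fun x : Fin n → ZMod m => (indDeg (V (g x)) x : ℕ∞)) := by
    apply le_antisymm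
    · refine Finset.le_inf fun x _ => ?_
      refine le_trans (Finset.inf_le (Finset.mem_univ (g x))) ?_
      exact Finset.inf_le ((hgV x (g x)).mpr rfl)
    · refine Finset.le_inf fun k _ => ?_
      refine Finset.le_inf fun v hv => ?_
      have hgvk : g v = k := (hgV v k).mp hv
      subst hgvk
      exact Finset.inf_le (Finset.mem_univ v)
  have hcoe : Finset.univ.inf (fun x : Fin n → ZMod m => (indDeg (V (g x)) x : ℕ∞))
      = ((Finset.univ.inf' hne fun x : Fin n → ZMod m => indDeg (V (g x)) x : ℕ) : ℕ∞) := by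
    apply le_antisymm
    · obtain ⟨x0, _, hx0⟩ := Finset.exists_mem_eq_inf' hne
        (fun x : Fin n → ZMod m => indDeg (V (g x)) x)
      rw [hx0]
      exact Finset.inf_le (Finset.mem_univ x0)
    · exact Finset.le_inf fun x _ => Nat.cast_le.mpr (Finset.inf'_le _ (Finset.mem_univ x))
  rw [hinf, hcoe, ← ENat.coe_sub]
  congr 1
  obtain ⟨x0, _, hx0⟩ := Finset.exists_mem_eq_inf' hne (fun x => indDeg (V (g x)) x)
  apply le_antisymm
  · rw [hx0]
    have h1 := local_plus_ind m n g hm V hgV x0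
    have h2 : localSensU m n g x0 = (m - 1) * n - indDeg (V (g x0)) x0 := by omega
    rw [← h2]
    exact Finset.le_sup (Finset.mem_univ x0)
  · rw [sensU]
    refine Finset.sup_le fun x _ => ?_
    have h3 := local_plus_ind m n g hm V hgV x
    have h4 : Finset.univ.inf' hne (fun x => indDeg (V (g x)) x) ≤ indDeg (V (g x)) x :=
      Finset.inf'_le _ (Finset.mem_univ x)
    omega

lemma rho_sum (V : ZMod m → Finset (Fin n → ZMod m))
    (hgV : ∀ x k, x ∈ V k ↔ g x = k) :
    (∑ k : ZMod m, ((rho m n V k).card : ℂ) * primRoot m ^ k.val) = keyS m n g := by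
  have h1 : ∀ k : ZMod m, ((rho m n V k).card : ℂ) * primRoot m ^ k.val
      = ∑ x : Fin n → ZMod m, (if x ∈ V (k - ∑ i, x i) then uRoot m k else 0) := by
    intro k
    rw [rho, ← Finset.sum_filter, Finset.sum_const, nsmul_eq_mul]
    rfl
  rw [Finset.sum_congr rfl fun k _ => h1 k, Finset.sum_comm, keyS]
  refine Finset.sum_congr rfl fun x _ => ?_
  rw [Finset.sum_eq_single (g x + ∑ i, x i)]
  · rw [if_pos ((hgV x _).mpr (by ring))]
  · intro k _ hk
    rw [if_neg]
    intro hmem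
    exact hk (by rw [(hgV x _).mp hmem]; ring)
  · intro h
    exact absurd (Finset.mem_univ _) h

end Sens

theorem stmt9 (m n s : ℕ) [NeZero m] (hm : 2 ≤ m) (hn : 1 ≤ n) (hs : 1 ≤ s) :
    (∃ g : (Fin n → ZMod m) → ZMod m,
        degU m n g = (m - 1) * n ∧ sensU m n g = s) ↔
    (∃ V : ZMod m → Finset (Fin n → ZMod m),
        (∀ x : Fin n → ZMod m, ∃! k : ZMod m, x ∈ V k) ∧
        (∑ k : ZMod m, ((rho m n V k).card : ℂ) * primRoot m ^ k.val) ≠ 0 ∧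
        (((m - 1) * n : ℕ) : ℕ∞) -
            Finset.univ.inf (fun k : ZMod m => minDeg (V k)) = (s : ℕ∞)) := by
  constructor
  · rintro ⟨g, hdeg, hsens⟩
    refine ⟨fun k => Finset.univ.filter fun x => g x = k, ?_, ?_, ?_⟩
    · intro x
      exact ⟨g x, by simp, fun k hk => ((Finset.mem_filter.mp hk).2).symm⟩
    · rw [rho_sum m n g _ (fun x k => by simp)]
      exact (degU_iff m n g hm hn).mp hdeg
    · rw [sens_formula m n g hm hn _ (fun x k => by simp), hsens]
  · rintro ⟨V, hpart, hsum, hsens⟩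
    set g : (Fin n → ZMod m) → ZMod m := fun x => (hpart x).choose with hg
    have hgV : ∀ x k, x ∈ V k ↔ g x = k := by
      intro x k
      constructor
      · intro h
        exact ((hpart x).choose_spec.2 k h).symm
      · rintro rfl
        exact (hpart x).choose_spec.1
    refine ⟨g, ?_, ?_⟩
    · rw [degU_iff m n g hm hn]
      rw [rho_sum m n g V hgV] at hsum
      exact hsum
    · rw [sens_formula m n g hm hn V hgV] at hsens
      exact Nat.cast_inj.mp hsens
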